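/- arXiv:1505.06080 — 2 statements merged into one kernel-verified Lean document; each statement's English description precedes it below -/
import Mathlib

section
/- For every positive integer d, every s ≥ 0 and every μ ∈ ℂ with Re(μ) < d, the change of variables ζ = coth(t) − 1 gives the identity I∞(μ,s) = e^{−s}·∫₀³ e^{−s·ζ}·(ζ+2)^{(d−2+μ)/2}·ζ^{(d−2−μ)/2} dζ, where both integrals converge absolutely. -/
/-!
Substitute ζ = coth t − 1. On (h, ∞) this is a decreasing bijection onto (0, 3) with
dζ = −dt / sinh² t, and since coth t ± 1 = e^{±t} / sinh t, the ζ-integrand pulled back and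
multiplied by 1 / sinh² t is exactly e^{s} · e^{−s coth t + μt} / sinh^d t. Absolute convergence of
the ζ-integral comes from its only singular factor ζ^{(d−2−μ)/2}, whose real exponent exceeds −1
exactly when Re μ < d; the change-of-variables theorem transports it to the t-side.
-/

open MeasureTheory

noncomputable def hconst : ℝ := (1/2) * Real.log (5/3)

noncomputable def cothR (t : ℝ) : ℝ := Real.cosh t / Real.sinh t

/-- `a ^ z := exp (z * log a)` for a real base `a > 0` and complex exponent `z`. -/
noncomputable def cpowR (a : ℝ) (z : ℂ) : ℂ := Complex.exp (z * Real.log a)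

noncomputable def Iinf (d : ℕ) (μ : ℂ) (s : ℝ) : ℂ :=
  ∫ t in Set.Ioi hconst,
    Complex.exp (-(s:ℂ) * (cothR t : ℂ) + μ * (t:ℂ)) / ((Real.sinh t : ℂ))^d

open Set Real

lemma cpowR_eq_cpow {a : ℝ} (ha : 0 < a) (z : ℂ) : cpowR a z = (a : ℂ) ^ z := by
  rw [cpowR, Complex.cpow_def_of_ne_zero (by exact_mod_cast ha.ne'), Complex.ofReal_log ha.le,
    mul_comm]

lemma cpowR_exp_div (x : ℝ) {y : ℝ} (hy : 0 < y) (z : ℂ) :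
    cpowR (exp x / y) z = Complex.exp (z * (x - Real.log y)) := by
  rw [cpowR, Real.log_div (exp_pos x).ne' hy.ne', Real.log_exp]; push_cast; rfl

lemma integrableOn_cpowR_Ioo {β : ℂ} (hβ : -1 < β.re) (b : ℝ) :
    IntegrableOn (fun ζ : ℝ => cpowR ζ β) (Ioo 0 b) :=
  ((intervalIntegral.intervalIntegrable_cpow' hβ).1.mono_set Ioo_subset_Ioc_self).congr_fun
    (fun _ hζ => (cpowR_eq_cpow hζ.1 β).symm) measurableSet_Ioo

lemma integrableOn_exp_mul_cpowR_mul_cpowR (s : ℝ) (α : ℂ) {β : ℂ} (hβ : -1 < β.re) (b : ℝ) :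
    IntegrableOn (fun ζ : ℝ => Complex.exp (-(s:ℂ) * (ζ:ℂ)) * cpowR (ζ + 2) α * cpowR ζ β)
      (Ioo 0 b) := by
  refine (integrableOn_cpowR_Ioo hβ b).continuousOn_mul_of_subset ?_ isCompact_Icc
    measurableSet_Ioo Ioo_subset_Icc_self
  have hlog : ContinuousOn (fun ζ : ℝ => Real.log (ζ + 2)) (Icc 0 b) :=
    (continuous_add_const 2).continuousOn.log fun ζ hζ => by linarith [hζ.1]
  unfold cpowR
  fun_prop

lemma cothR_add_one {t : ℝ} (ht : sinh t ≠ 0) : cothR t + 1 = exp t / sinh t := by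
  rw [cothR, div_add_one ht, cosh_add_sinh]

lemma cothR_sub_one {t : ℝ} (ht : sinh t ≠ 0) : cothR t - 1 = exp (-t) / sinh t := by
  rw [cothR, div_sub_one ht, cosh_sub_sinh]

lemma cothR_sub_one_eq_two_div {t : ℝ} (ht : t ≠ 0) : cothR t - 1 = 2 / (exp (2 * t) - 1) := by
  have hs : sinh t ≠ 0 := sinh_ne_zero.2 ht
  have he : exp (2 * t) - 1 ≠ 0 := by
    rw [sub_ne_zero, Ne, exp_eq_one_iff]; exact mul_ne_zero two_ne_zero ht
  rw [cothR_sub_one hs, div_eq_div_iff hs he, sinh_eq, show 2 * t = t + t by ring, exp_add,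
    exp_neg]
  field_simp

lemma hasDerivAt_cothR {t : ℝ} (ht : sinh t ≠ 0) : HasDerivAt cothR (-(sinh t ^ 2)⁻¹) t := by
  refine ((hasDerivAt_cosh t).div (hasDerivAt_sinh t) ht).congr_deriv ?_
  field_simp
  linear_combination -cosh_sq t

lemma exp_two_mul_hconst : exp (2 * hconst) = 5 / 3 := by
  rw [hconst, ← mul_assoc, mul_one_div_cancel two_ne_zero, one_mul, exp_log (by norm_num)]

lemma strictAntiOn_cothR : StrictAntiOn cothR (Ioi 0) := by
  intro a ha b hb hab
  have key : ∀ t : ℝ, 0 < t → cothR t = 2 / (exp (2 * t) - 1) + 1 := fun t ht => by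
    rw [← cothR_sub_one_eq_two_div ht.ne']; ring
  rw [key a ha, key b hb]
  have ha2 : 0 < 2 * a := mul_pos two_pos ha
  gcongr
  linarith [add_one_lt_exp ha2.ne']

lemma hconst_pos : 0 < hconst := mul_pos one_half_pos (log_pos (by norm_num))

lemma cothR_sub_one_image : (fun t => cothR t - 1) '' Ioi hconst = Ioo 0 3 := by
  have hh := hconst_pos
  ext ζ
  constructor
  · rintro ⟨t, ht, rfl⟩
    have ht0 : t ≠ 0 := (hh.trans ht).ne'
    have hE : 5 / 3 < exp (2 * t) := by
      rw [← exp_two_mul_hconst]; exact exp_lt_exp.2 (by linarith [mem_Ioi.1 ht])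
    show 0 < cothR t - 1 ∧ cothR t - 1 < 3
    rw [cothR_sub_one_eq_two_div ht0]
    constructor
    · apply div_pos two_pos; linarith
    · rw [div_lt_iff₀ (by linarith)]; linarith
  · rintro ⟨h0, h3⟩
    have h53 : 5 / 3 < 1 + 2 / ζ := by
      have : 2 / 3 < 2 / ζ := div_lt_div_of_pos_left two_pos h0 h3
      linarith
    have ht : hconst < Real.log (1 + 2 / ζ) / 2 := by
      have := log_lt_log (by norm_num) h53
      rw [hconst]; linarith
    refine ⟨Real.log (1 + 2 / ζ) / 2, ht, ?_⟩
    have hE : exp (2 * (Real.log (1 + 2 / ζ) / 2)) = 1 + 2 / ζ := by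
      rw [mul_div_cancel₀ _ two_ne_zero, exp_log (by positivity)]
    show cothR _ - 1 = ζ
    rw [cothR_sub_one_eq_two_div (hh.trans ht).ne', hE]
    field_simp
    ring

lemma abs_deriv_smul_integrand_cothR_sub_one (d : ℕ) (s : ℝ) (μ : ℂ) {t : ℝ} (ht : 0 < t) :
    |-(sinh t ^ 2)⁻¹| • (Complex.exp (-(s:ℂ) * ((cothR t - 1 : ℝ) : ℂ))
        * cpowR (cothR t - 1 + 2) (((d:ℂ) - 2 + μ)/2) * cpowR (cothR t - 1) (((d:ℂ) - 2 - μ)/2))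
      = Complex.exp s *
        (Complex.exp (-(s:ℂ) * (cothR t : ℂ) + μ * (t:ℂ)) / ((Real.sinh t : ℂ))^d) := by
  have hsinh : 0 < sinh t := sinh_pos_iff.2 ht
  set L := Real.log (sinh t)
  have hL : sinh t = exp L := (exp_log hsinh).symm
  have habs : |-(sinh t ^ 2)⁻¹| = exp (-2 * L) := by
    rw [abs_neg, abs_inv, abs_of_pos (by positivity), hL, ← exp_nat_mul, ← exp_neg]
    ring_nf
  have hplus : cpowR (cothR t - 1 + 2) (((d:ℂ) - 2 + μ)/2)
      = Complex.exp (((d:ℂ) - 2 + μ)/2 * (t - L)) := by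
    rw [show cothR t - 1 + 2 = cothR t + 1 by ring, cothR_add_one hsinh.ne', cpowR_exp_div _ hsinh]
  have hminus : cpowR (cothR t - 1) (((d:ℂ) - 2 - μ)/2)
      = Complex.exp (((d:ℂ) - 2 - μ)/2 * (-t - L)) := by
    rw [cothR_sub_one hsinh.ne', cpowR_exp_div _ hsinh]; push_cast; rfl
  have hpow : ((sinh t : ℝ) : ℂ) ^ d = Complex.exp (d * L) := by
    rw [hL, Complex.ofReal_exp, ← Complex.exp_nat_mul]
  rw [hplus, hminus, hpow, habs, Complex.real_smul, Complex.ofReal_exp, ← Complex.exp_sub]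
  simp only [← Complex.exp_add]
  congr 1
  push_cast
  ring

theorem stmt2_general (d : ℕ) (s : ℝ) (μ : ℂ) (hμ : μ.re < (d : ℝ)) :
    IntegrableOn
      (fun t : ℝ => Complex.exp (-(s:ℂ) * (cothR t : ℂ) + μ * (t:ℂ)) / ((Real.sinh t : ℂ))^d)
      (Set.Ioi hconst) ∧
    IntegrableOn
      (fun ζ : ℝ => Complex.exp (-(s:ℂ) * (ζ:ℂ)) * cpowR (ζ + 2) (((d:ℂ) - 2 + μ)/2)
        * cpowR ζ (((d:ℂ) - 2 - μ)/2))
      (Set.Ioo (0:ℝ) 3) ∧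
    Iinf d μ s = Complex.exp (-(s:ℂ)) *
      ∫ ζ in Set.Ioo (0:ℝ) 3, Complex.exp (-(s:ℂ) * (ζ:ℂ)) * cpowR (ζ + 2) (((d:ℂ) - 2 + μ)/2)
        * cpowR ζ (((d:ℂ) - 2 - μ)/2) := by
  have hβ : -1 < (((d:ℂ) - 2 - μ)/2).re := by
    simp only [Complex.div_ofNat_re, Complex.sub_re, Complex.natCast_re, Complex.re_ofNat]
    linarith
  have hG := integrableOn_exp_mul_cpowR_mul_cpowR s (((d:ℂ) - 2 + μ)/2) hβ 3
  have hderiv : ∀ t ∈ Ioi hconst,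
      HasDerivWithinAt (fun t => cothR t - 1) (-(sinh t ^ 2)⁻¹) (Ioi hconst) t := fun t ht =>
    ((hasDerivAt_cothR (sinh_pos_iff.2 (hconst_pos.trans ht)).ne').sub_const 1).hasDerivWithinAt
  have hinj : InjOn (fun t => cothR t - 1) (Ioi hconst) :=
    ((strictAntiOn_cothR.mono (Ioi_subset_Ioi hconst_pos.le)).add_const (-1)).injOn
  have hpointwise := fun t (ht : t ∈ Ioi hconst) =>
    abs_deriv_smul_integrand_cothR_sub_one d s μ (hconst_pos.trans ht)
  refine ⟨?_, hG, ?_⟩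
  · rw [← cothR_sub_one_image,
      integrableOn_image_iff_integrableOn_abs_deriv_smul measurableSet_Ioi hderiv hinj] at hG
    have := (hG.congr_fun hpointwise measurableSet_Ioi).const_mul (Complex.exp (-s))
    simpa only [← mul_assoc, ← Complex.exp_add, neg_add_cancel, Complex.exp_zero, one_mul]
  · rw [← cothR_sub_one_image,
      integral_image_eq_integral_abs_deriv_smul measurableSet_Ioi hderiv hinj,
      setIntegral_congr_fun measurableSet_Ioi hpointwise, integral_const_mul, Iinf, ← mul_assoc,
      ← Complex.exp_add, neg_add_cancel, Complex.exp_zero, one_mul]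

theorem stmt2 (d : ℕ) (hd : 0 < d) (s : ℝ) (hs : 0 ≤ s) (μ : ℂ) (hμ : μ.re < (d : ℝ)) :
    IntegrableOn
      (fun t : ℝ => Complex.exp (-(s:ℂ) * (cothR t : ℂ) + μ * (t:ℂ)) / ((Real.sinh t : ℂ))^d)
      (Set.Ioi hconst) ∧
    IntegrableOn
      (fun ζ : ℝ => Complex.exp (-(s:ℂ) * (ζ:ℂ)) * cpowR (ζ + 2) (((d:ℂ) - 2 + μ)/2)
        * cpowR ζ (((d:ℂ) - 2 - μ)/2))
      (Set.Ioo (0:ℝ) 3) ∧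
    Iinf d μ s = Complex.exp (-(s:ℂ)) *
      ∫ ζ in Set.Ioo (0:ℝ) 3, Complex.exp (-(s:ℂ) * (ζ:ℂ)) * cpowR (ζ + 2) (((d:ℂ) - 2 + μ)/2)
        * cpowR ζ (((d:ℂ) - 2 - μ)/2) :=
  stmt2_general d s μ hμ
end

section
/- Let q ≥ 1 be an integer and b > 0. Then there exist constants d₀ > 0 and N₀ ∈ ℕ such that for every integer n ≥ N₀ one has L^n_{q−1}(b/2) ≠ 0 and |b·(L^n_{q−1})'(b/2)/L^n_{q−1}(b/2)| ≤ d₀/n; consequently, every real number τ with (n − b/2 − τ)·L^n_{q−1}(b/2) + b·(L^n_{q−1})'(b/2) = 0 and n ≥ N₀ satisfies n − b/2 − d₀/n ≤ τ ≤ n − b/2 + d₀/n. -/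
/-!
Write `q = k + 1` and fix `x`. The coefficient `C(k+n, k) ≥ n^k / k!` of the constant term of
`L^n_k(x)` dominates, since every other coefficient `C(k+n, m)`, `m < k`, is `O(n^(k-1))`.
The derivative `(L^n_k)' = -L^(n+1)_(k-1)` involves only such coefficients, so
`(L^n_k)'(x) / L^n_k(x) = O(1/n)`; solving the eigenvalue condition for `τ` gives
`τ = n - b/2 + b (L^n_k)'(b/2) / L^n_k(b/2)`.
-/

/-- The generalized Laguerre polynomial
`L^n_{q-1}(x) = Σ_{i=0}^{q-1} C(q-1+n, q-1-i) (-x)^i / i!`. -/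
noncomputable def lagPoly (q n : ℕ) (x : ℝ) : ℝ :=
  ∑ i ∈ Finset.range q, (Nat.choose (q - 1 + n) (q - 1 - i) : ℝ) * (-x)^i / (Nat.factorial i : ℝ)

open Filter Asymptotics Finset Nat

lemma lagPoly_succ_eq (k n : ℕ) (x : ℝ) :
    lagPoly (k + 1) n x = (k + n).choose k +
      ∑ i ∈ range k, ((k + n).choose (k - 1 - i) : ℝ) * ((-x) ^ (i + 1) / (i + 1)!) := by
  rw [lagPoly, sum_range_succ', add_comm]
  congr 1
  · simp
  · refine sum_congr rfl fun i _ => ?_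
    rw [Nat.add_sub_cancel, Nat.sub_sub, add_comm 1 i, mul_div_assoc]

lemma lagPoly_add_one_eq (k n : ℕ) (x : ℝ) :
    lagPoly k (n + 1) x = ∑ i ∈ range k, ((k + n).choose (k - 1 - i) : ℝ) * ((-x) ^ i / i !) := by
  refine sum_congr rfl fun i hi => ?_
  rw [show k - 1 + (n + 1) = k + n by grind, mul_div_assoc]

lemma hasDerivAt_lagPoly_succ (k n : ℕ) (x : ℝ) :
    HasDerivAt (lagPoly (k + 1) n) (-lagPoly k (n + 1) x) x := by
  have hterm (i : ℕ) : HasDerivAt (fun y : ℝ => (-y) ^ (i + 1) / (i + 1)!) (-((-x) ^ i / i !)) x := by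
    refine (((hasDerivAt_neg x).pow (i + 1)).div_const ((i + 1)! : ℝ)).congr_deriv ?_
    rw [factorial_succ]
    push_cast
    field_simp
  rw [show lagPoly (k + 1) n = _ from funext (lagPoly_succ_eq k n), lagPoly_add_one_eq,
    ← sum_neg_distrib]
  refine ((hasDerivAt_const x _).fun_add (HasDerivAt.fun_sum fun i _ => ?_)).congr_deriv
    (zero_add _)
  simpa only [mul_neg] using (hterm i).const_mul _

lemma deriv_lagPoly_succ (k n : ℕ) (x : ℝ) :
    deriv (lagPoly (k + 1) n) x = -lagPoly k (n + 1) x :=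
  (hasDerivAt_lagPoly_succ k n x).deriv

lemma isBigO_choose_add {k m : ℕ} (hm : m < k) :
    (fun n : ℕ => ((k + n).choose m : ℝ)) =O[atTop] fun n => (n : ℝ) ^ k / n := by
  refine IsBigO.of_bound (2 ^ m) ?_
  filter_upwards [eventually_ge_atTop k, eventually_ge_atTop 1] with n hkn hn
  have hn' : (1 : ℝ) ≤ n := by exact_mod_cast hn
  have hkn' : ((k + n : ℕ) : ℝ) ≤ 2 * n := by exact_mod_cast (by omega : k + n ≤ 2 * n)
  rw [Real.norm_natCast, Real.norm_of_nonneg (by positivity), mul_div_assoc',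
    le_div_iff₀ (by positivity)]
  calc ((k + n).choose m : ℝ) * n ≤ ((k + n : ℕ) : ℝ) ^ m * n := by
        gcongr; exact_mod_cast choose_le_pow (k + n) m
    _ ≤ (2 * n) ^ m * n := by gcongr
    _ = 2 ^ m * (n : ℝ) ^ (m + 1) := by ring
    _ ≤ 2 ^ m * (n : ℝ) ^ k := by gcongr; exact hm

lemma isBigO_sum_choose_mul (k : ℕ) (c : ℕ → ℝ) :
    (fun n : ℕ => ∑ i ∈ range k, ((k + n).choose (k - 1 - i) : ℝ) * c i) =O[atTop]
      fun n => (n : ℝ) ^ k / n :=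
  IsBigO.fun_sum fun i hi => by
    simpa only [mul_comm] using (isBigO_choose_add (by grind)).const_mul_left (c i)

lemma isBigO_lagPoly_succ_sub_choose (k : ℕ) (x : ℝ) :
    (fun n : ℕ => lagPoly (k + 1) n x - (k + n).choose k) =O[atTop] fun n => (n : ℝ) ^ k / n := by
  simpa only [lagPoly_succ_eq, add_sub_cancel_left] using isBigO_sum_choose_mul k _

lemma isBigO_deriv_lagPoly_succ (k : ℕ) (x : ℝ) :
    (fun n : ℕ => deriv (lagPoly (k + 1) n) x) =O[atTop] fun n => (n : ℝ) ^ k / n := by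
  simpa only [deriv_lagPoly_succ, lagPoly_add_one_eq, isBigO_neg_left] using
    isBigO_sum_choose_mul k _

lemma isLittleO_pow_div_self (k : ℕ) :
    (fun n : ℕ => (n : ℝ) ^ k / n) =o[atTop] fun n => (n : ℝ) ^ k := by
  have h : (fun n : ℕ => (n : ℝ)⁻¹) =o[atTop] fun _ => (1 : ℝ) :=
    (isLittleO_one_iff ℝ).mpr (tendsto_inv_atTop_zero.comp tendsto_natCast_atTop_atTop)
  simpa only [div_eq_mul_inv, mul_one] using
    (isBigO_refl (fun n : ℕ => (n : ℝ) ^ k) _).mul_isLittleO h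

lemma eventually_pow_div_le_lagPoly_succ (k : ℕ) (x : ℝ) :
    ∀ᶠ n : ℕ in atTop, (n : ℝ) ^ k / (2 * k !) ≤ lagPoly (k + 1) n x := by
  have hsmall := ((isBigO_lagPoly_succ_sub_choose k x).trans_isLittleO
    (isLittleO_pow_div_self k)).def (c := 1 / (2 * k !)) (by positivity)
  filter_upwards [hsmall] with n hn
  have hchoose : (n : ℝ) ^ k / k ! ≤ (k + n).choose k := by
    refine le_trans ?_ (pow_le_choose k (k + n))
    gcongr
    omega
  have hclose : |lagPoly (k + 1) n x - (k + n).choose k| ≤ (n : ℝ) ^ k / (2 * k !) := by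
    simpa [div_eq_inv_mul] using hn
  have hhalf : (n : ℝ) ^ k / k ! = 2 * ((n : ℝ) ^ k / (2 * k !)) := by field_simp
  linarith [neg_abs_le (lagPoly (k + 1) n x - (k + n).choose k)]

lemma isBigO_deriv_lagPoly_succ_div (k : ℕ) (x : ℝ) :
    (fun n : ℕ => deriv (lagPoly (k + 1) n) x / lagPoly (k + 1) n x) =O[atTop]
      fun n => (n : ℝ)⁻¹ := by
  have hinv : (fun n : ℕ => (lagPoly (k + 1) n x)⁻¹) =O[atTop] fun n => ((n : ℝ) ^ k)⁻¹ := by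
    refine IsBigO.of_bound (2 * k !) ?_
    filter_upwards [eventually_pow_div_le_lagPoly_succ k x, eventually_gt_atTop 0] with n hP hn
    have hlow : 0 < (n : ℝ) ^ k / (2 * k !) := by positivity
    calc ‖(lagPoly (k + 1) n x)⁻¹‖ = (lagPoly (k + 1) n x)⁻¹ := by
          rw [norm_inv, Real.norm_of_nonneg (hlow.trans_le hP).le]
      _ ≤ ((n : ℝ) ^ k / (2 * k !))⁻¹ := inv_anti₀ hlow hP
      _ = 2 * k ! * ‖((n : ℝ) ^ k)⁻¹‖ := by
          rw [norm_inv, norm_pow, Real.norm_natCast, inv_div, div_eq_mul_inv]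
  refine ((isBigO_deriv_lagPoly_succ k x).mul hinv).trans_eventuallyEq ?_
  filter_upwards [eventually_gt_atTop 0] with n hn
  field_simp

lemma le_and_le_of_sub_mul_add_eq_zero {a τ p e ε : ℝ} (hp : p ≠ 0) (he : |e / p| ≤ ε)
    (h : (a - τ) * p + e = 0) : a - ε ≤ τ ∧ τ ≤ a + ε := by
  have hτ : τ - a = e / p := by
    rw [eq_div_iff hp]
    linear_combination -h
  rw [← hτ, abs_le] at he
  constructor <;> linarith [he.1, he.2]

theorem stmt15_general (q : ℕ) (hq : 1 ≤ q) (b : ℝ) :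
    ∃ d₀ : ℝ, 0 < d₀ ∧ ∃ N₀ : ℕ, ∀ n : ℕ, N₀ ≤ n →
      lagPoly q n (b/2) ≠ 0 ∧
      |b * deriv (lagPoly q n) (b/2) / lagPoly q n (b/2)| ≤ d₀ / (n : ℝ) ∧
      ∀ τ : ℝ,
        ((n:ℝ) - b/2 - τ) * lagPoly q n (b/2) + b * deriv (lagPoly q n) (b/2) = 0 →
        (n:ℝ) - b/2 - d₀/(n:ℝ) ≤ τ ∧ τ ≤ (n:ℝ) - b/2 + d₀/(n:ℝ) := by
  obtain ⟨k, rfl⟩ : ∃ k, q = k + 1 := ⟨q - 1, by omega⟩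
  obtain ⟨d₀, hd₀, hratio⟩ :=
    ((isBigO_deriv_lagPoly_succ_div k (b / 2)).const_mul_left b).exists_pos
  obtain ⟨N₀, hN₀⟩ := eventually_atTop.mp
    ((eventually_pow_div_le_lagPoly_succ k (b / 2)).and ((eventually_gt_atTop 0).and hratio.bound))
  refine ⟨d₀, hd₀, N₀, fun n hn => ?_⟩
  obtain ⟨hlow, hn₀, hbound⟩ := hN₀ n hn
  have hP : lagPoly (k + 1) n (b / 2) ≠ 0 := (lt_of_lt_of_le (by positivity) hlow).ne'
  have hbound' : |b * deriv (lagPoly (k + 1) n) (b / 2) / lagPoly (k + 1) n (b / 2)| ≤ d₀ / n := by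
    rwa [Real.norm_eq_abs, norm_inv, Real.norm_natCast, ← mul_div_assoc, ← div_eq_mul_inv]
      at hbound
  exact ⟨hP, hbound', fun τ hτ => le_and_le_of_sub_mul_add_eq_zero hP hbound' hτ⟩

theorem stmt15 (q : ℕ) (hq : 1 ≤ q) (b : ℝ) (hb : 0 < b) :
    ∃ d₀ : ℝ, 0 < d₀ ∧ ∃ N₀ : ℕ, ∀ n : ℕ, N₀ ≤ n →
      lagPoly q n (b/2) ≠ 0 ∧
      |b * deriv (lagPoly q n) (b/2) / lagPoly q n (b/2)| ≤ d₀ / (n : ℝ) ∧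
      ∀ τ : ℝ,
        ((n:ℝ) - b/2 - τ) * lagPoly q n (b/2) + b * deriv (lagPoly q n) (b/2) = 0 →
        (n:ℝ) - b/2 - d₀/(n:ℝ) ≤ τ ∧ τ ≤ (n:ℝ) - b/2 + d₀/(n:ℝ) :=
  stmt15_general q hq b
end
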